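/- arXiv:1209.5462 — 7 statements merged into one kernel-verified Lean document; each statement's English description precedes it below -/
import Mathlib

section
/- Let B be an n×n upper bidiagonal matrix with positive diagonal entries a_1,…,a_n and positive superdiagonal entries b_1,…,b_{n-1}. Define the oqd transform producing hat{B} by: tilde{a}_1 = a_1; for k = 1,…,n-1: hat{a}_k = sqrt(tilde{a}_k^2 + b_k^2), hat{b}_k = b_k·(a_{k+1}/hat{a}_k), tilde{a}_{k+1} = tilde{a}_k·(a_{k+1}/hat{a}_k); hat{a}_n = tilde{a}_n. Then B·Bᵀ = hat{B}ᵀ·hat{B}. -/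
open Matrix

/-- The `n×n` upper bidiagonal matrix with diagonal `a` and superdiagonal `b`. -/
def upperBidiagonal (n : ℕ) (a b : ℕ → ℝ) : Matrix (Fin n) (Fin n) ℝ :=
  Matrix.of fun i j => if (j : ℕ) = (i : ℕ) then a i
    else if (j : ℕ) = (i : ℕ) + 1 then b i else 0

lemma upperBidiagonal_mul_transpose_apply (n : ℕ) (a b : ℕ → ℝ) (i j : Fin n) :
    (upperBidiagonal n a b * (upperBidiagonal n a b)ᵀ) i j =
      (if (j:ℕ) = (i:ℕ) then a i * a i + (if (i:ℕ)+1 < n then b i * b i else 0)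
       else if (j:ℕ) = (i:ℕ)+1 then b i * a j
       else if (i:ℕ) = (j:ℕ)+1 then a i * b j
       else 0) := by
  set G : ℕ → ℝ := fun k => (if k = (j:ℕ) then a j else if k = (j:ℕ)+1 then b j else 0) with hG
  rw [mul_apply]
  simp only [transpose_apply, upperBidiagonal, of_apply]
  rw [Fin.sum_univ_eq_sum_range (fun k =>
    (if k = (i:ℕ) then a i else if k = (i:ℕ)+1 then b i else 0) * G k)]
  have hsplit : ∀ k, (if k = (i:ℕ) then a i else if k = (i:ℕ)+1 then b i else 0) * G k
      = (if k = (i:ℕ) then a (i:ℕ) * G k else 0) + (if k = (i:ℕ)+1 then b (i:ℕ) * G k else 0) := by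
    intro k
    by_cases h : k = (i:ℕ)
    · simp [h]
    · by_cases h2 : k = (i:ℕ)+1 <;> simp [h, h2]
  rw [Finset.sum_congr rfl (fun k _ => hsplit k), Finset.sum_add_distrib,
    Finset.sum_ite_eq' (Finset.range n) ((i:ℕ)) (fun k => a (i:ℕ) * G k),
    Finset.sum_ite_eq' (Finset.range n) ((i:ℕ)+1) (fun k => b (i:ℕ) * G k)]
  simp only [Finset.mem_range, i.isLt, if_true, hG]
  split_ifs <;> first | omega | ring1 | rw [show (j:ℕ) = (i:ℕ) from by omega]

lemma transpose_mul_upperBidiagonal_apply (n : ℕ) (a b : ℕ → ℝ) (i j : Fin n) :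
    ((upperBidiagonal n a b)ᵀ * upperBidiagonal n a b) i j =
      (if (j:ℕ) = (i:ℕ) then a i * a i + (if (i:ℕ) = 0 then 0 else b ((i:ℕ)-1) * b ((i:ℕ)-1))
       else if (j:ℕ) = (i:ℕ)+1 then a i * b i
       else if (i:ℕ) = (j:ℕ)+1 then a j * b j
       else 0) := by
  set G : ℕ → ℝ := fun k => (if (j:ℕ) = k then a k else if (j:ℕ) = k+1 then b k else 0) with hG
  rw [mul_apply]
  simp only [transpose_apply, upperBidiagonal, of_apply]
  rw [Fin.sum_univ_eq_sum_range (fun k =>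
    (if (i:ℕ) = k then a k else if (i:ℕ) = k+1 then b k else 0) * G k)]
  have hsplit : ∀ k, (if (i:ℕ) = k then a k else if (i:ℕ) = k+1 then b k else 0) * G k
      = (if (i:ℕ) = k then a k * G k else 0) + (if (i:ℕ) = k+1 then b k * G k else 0) := by
    intro k
    by_cases h : (i:ℕ) = k
    · have : ¬ (i:ℕ) = k + 1 := by omega
      simp [h, this]
    · by_cases h2 : (i:ℕ) = k+1 <;> simp [h, h2]
  rw [Finset.sum_congr rfl (fun k _ => hsplit k), Finset.sum_add_distrib,
    Finset.sum_ite_eq (Finset.range n) ((i:ℕ)) (fun k => a k * G k)]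
  have hsecond : (∑ k ∈ Finset.range n, if (i:ℕ) = k+1 then b k * G k else 0)
      = (if (i:ℕ) = 0 then 0 else b ((i:ℕ)-1) * G ((i:ℕ)-1)) := by
    rcases Nat.eq_zero_or_eq_succ_pred (i:ℕ) with h0 | hs
    · rw [h0]; simp
    · have hne : ¬ (i:ℕ) = 0 := by omega
      rw [if_neg hne]
      have : ∀ k ∈ Finset.range n, (if (i:ℕ) = k+1 then b k * G k else 0)
          = (if k = (i:ℕ)-1 then b k * G k else 0) := by
        intro k _; apply if_congr _ rfl rfl; omega
      rw [Finset.sum_congr rfl this,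
        Finset.sum_ite_eq' (Finset.range n) ((i:ℕ)-1) (fun k => b k * G k)]
      have : (i:ℕ)-1 ∈ Finset.range n := by
        rw [Finset.mem_range]; have := i.isLt; omega
      rw [if_pos this]
  rw [hsecond]
  simp only [Finset.mem_range, i.isLt, if_true, hG]
  split_ifs <;>
    first
      | omega
      | ring1
      | (rw [show (j:ℕ) = (i:ℕ) from by omega]; try ring1)
      | (rw [show (i:ℕ)-1 = (j:ℕ) from by omega]; try ring1)

/-- The oqd transform of a positive upper bidiagonal matrix `B` produces `B̂`
with `B * Bᵀ = B̂ᵀ * B̂`. -/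
theorem oqd_transform (n : ℕ) (hn : 0 < n) (a b ahat bhat atil : ℕ → ℝ)
    (ha : ∀ k < n, 0 < a k) (hb : ∀ k, k + 1 < n → 0 < b k)
    (h1 : atil 0 = a 0)
    (h2 : ∀ k, k + 1 < n → ahat k = Real.sqrt ((atil k) ^ 2 + (b k) ^ 2))
    (h3 : ∀ k, k + 1 < n → bhat k = b k * (a (k + 1) / ahat k))
    (h4 : ∀ k, k + 1 < n → atil (k + 1) = atil k * (a (k + 1) / ahat k))
    (h5 : ahat (n - 1) = atil (n - 1)) :
    upperBidiagonal n a b * (upperBidiagonal n a b)ᵀ =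
      (upperBidiagonal n ahat bhat)ᵀ * upperBidiagonal n ahat bhat := by
  -- positivity of atil
  have key : ∀ k, k < n → 0 < atil k := by
    intro k
    induction k with
    | zero => intro _; rw [h1]; exact ha 0 hn
    | succ m ih =>
      intro hm
      have hm' : m < n := by omega
      have hmt : 0 < atil m := ih hm'
      have hhat : 0 < ahat m := by
        rw [h2 m hm]
        exact Real.sqrt_pos.mpr (add_pos (pow_pos hmt 2) (pow_pos (hb m hm) 2))
      rw [h4 m hm]
      exact mul_pos hmt (div_pos (ha (m+1) hm) hhat)
  have hatpos : ∀ k, k+1 < n → 0 < ahat k := by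
    intro k hk
    rw [h2 k hk]
    exact Real.sqrt_pos.mpr (add_pos (pow_pos (key k (by omega)) 2) (pow_pos (hb k hk) 2))
  have hsq : ∀ k, k+1 < n → ahat k ^ 2 = atil k ^ 2 + b k ^ 2 := by
    intro k hk
    rw [h2 k hk]
    exact Real.sq_sqrt (by positivity)
  have hC : ∀ k, k < n → atil k ^ 2 + (if k = 0 then 0 else (bhat (k-1)) ^ 2) = a k ^ 2 := by
    intro k hk
    cases k with
    | zero => simp [h1]
    | succ m =>
      have hm : m + 1 < n := hk
      simp only [Nat.succ_sub_one, if_neg (Nat.succ_ne_zero m)]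
      rw [h4 m hm, h3 m hm]
      have h0 : ahat m ≠ 0 := ne_of_gt (hatpos m hm)
      have hs := hsq m hm
      field_simp
      linear_combination (-(a (m+1) ^ 2)) * hs
  ext i j
  rw [upperBidiagonal_mul_transpose_apply, transpose_mul_upperBidiagonal_apply]
  by_cases e1 : (j:ℕ) = (i:ℕ)
  · rw [if_pos e1, if_pos e1]
    have hCi := hC (i:ℕ) i.isLt
    have sq2 : ∀ x : ℝ, x * x = x ^ 2 := fun x => (sq x).symm
    simp only [sq2]
    by_cases hlt : (i:ℕ)+1 < n
    · rw [if_pos hlt, hsq (i:ℕ) hlt]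
      linarith [hCi]
    · have hieq : (i:ℕ) = n - 1 := by have := i.isLt; omega
      have h5' : ahat (i:ℕ) = atil (i:ℕ) := by rw [hieq]; exact h5
      rw [if_neg hlt, h5']
      linarith [hCi]
  · by_cases e2 : (j:ℕ) = (i:ℕ)+1
    · rw [if_neg e1, if_pos e2, if_neg e1, if_pos e2]
      have hlt : (i:ℕ)+1 < n := e2 ▸ j.isLt
      have h0 : ahat (i:ℕ) ≠ 0 := ne_of_gt (hatpos (i:ℕ) hlt)
      rw [h3 (i:ℕ) hlt, show ((i:ℕ)+1) = (j:ℕ) from e2.symm]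
      field_simp
      try ring
    · by_cases e3 : (i:ℕ) = (j:ℕ)+1
      · rw [if_neg e1, if_neg e2, if_pos e3, if_neg e1, if_neg e2, if_pos e3]
        have hlt : (j:ℕ)+1 < n := e3 ▸ i.isLt
        have h0 : ahat (j:ℕ) ≠ 0 := ne_of_gt (hatpos (j:ℕ) hlt)
        rw [h3 (j:ℕ) hlt, show ((j:ℕ)+1) = (i:ℕ) from e3.symm]
        field_simp
        try ring
      · rw [if_neg e1, if_neg e2, if_neg e3, if_neg e1, if_neg e2, if_neg e3]
end

section
/- Let q_1,…,q_n > 0 and e_1,…,e_{n-1} > 0, and let L be the unit lower bidiagonal matrix with subdiagonal entries e_1,…,e_{n-1} and U the upper bidiagonal matrix with diagonal q_1,…,q_n and superdiagonal entries all equal to 1. Apply one dqd transform (dqds with shift s = 0): d_1 = q_1; for k = 1,…,n-1: hat{q}_k = d_k + e_k, hat{e}_k = e_k·q_{k+1}/hat{q}_k, d_{k+1} = d_k·q_{k+1}/hat{q}_k; hat{q}_n = d_n. Then with hat{L}, hat{U} defined from {hat{q}, hat{e}} analogously, hat{L}·hat{U} = U·L. -/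
open Matrix

/-- Unit lower bidiagonal matrix with subdiagonal entries `e`. -/
def unitLowerBidiagonal (n : ℕ) (e : ℕ → ℝ) : Matrix (Fin n) (Fin n) ℝ :=
  Matrix.of fun i j => if (i : ℕ) = (j : ℕ) then 1
    else if (i : ℕ) = (j : ℕ) + 1 then e j else 0

/-- Upper bidiagonal matrix with diagonal `q` and superdiagonal entries all `1`. -/
def upperBidiagonalU (n : ℕ) (q : ℕ → ℝ) : Matrix (Fin n) (Fin n) ℝ :=
  Matrix.of fun i j => if (j : ℕ) = (i : ℕ) then q i
    else if (j : ℕ) = (i : ℕ) + 1 then 1 else 0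

lemma sum_one_aux (n a : ℕ) (f : ℕ → ℝ) (h : ∀ k, k ≠ a → f k = 0) :
    ∑ k ∈ Finset.range n, f k = if a < n then f a else 0 := by
  have hc : ∀ k ∈ Finset.range n, f k = if k = a then f k else 0 := by
    intro k _
    by_cases h1 : k = a <;> simp [h1, h]
  rw [Finset.sum_congr rfl hc]
  simp [Finset.sum_ite_eq', Finset.mem_range]

lemma sum_two_aux (n a b : ℕ) (hab : a ≠ b) (f : ℕ → ℝ)
    (h : ∀ k, k ≠ a → k ≠ b → f k = 0) :
    ∑ k ∈ Finset.range n, f k =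
      (if a < n then f a else 0) + (if b < n then f b else 0) := by
  have hc : ∀ k ∈ Finset.range n, f k =
      (if k = a then f k else 0) + (if k = b then f k else 0) := by
    intro k _
    by_cases h1 : k = a
    · subst h1; simp [hab]
    · by_cases h2 : k = b
      · subst h2; simp [h1]
      · simp [h1, h2, h k h1 h2]
  rw [Finset.sum_congr rfl hc, Finset.sum_add_distrib]
  simp [Finset.sum_ite_eq', Finset.mem_range]

set_option maxHeartbeats 2000000 in
/-- One dqd transform (dqds with shift `s = 0`) implements `L̂ * Û = U * L`. -/
theorem dqd_transform (n : ℕ) (hn : 0 < n) (q e qhat ehat d : ℕ → ℝ)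
    (hq : ∀ k < n, 0 < q k) (he : ∀ k, k + 1 < n → 0 < e k)
    (h1 : d 0 = q 0)
    (h2 : ∀ k, k + 1 < n → qhat k = d k + e k)
    (h3 : ∀ k, k + 1 < n → ehat k = e k * q (k + 1) / qhat k)
    (h4 : ∀ k, k + 1 < n → d (k + 1) = d k * q (k + 1) / qhat k)
    (h5 : qhat (n - 1) = d (n - 1)) :
    unitLowerBidiagonal n ehat * upperBidiagonalU n qhat =
      upperBidiagonalU n q * unitLowerBidiagonal n e := by
  have hd : ∀ k, k < n → 0 < d k := by
    intro k
    induction k with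
    | zero => intro _; rw [h1]; exact hq 0 hn
    | succ m ih =>
      intro hk
      have hdm : 0 < d m := ih (by omega)
      have hqh : 0 < qhat m := by
        rw [h2 m hk]; exact add_pos hdm (he m hk)
      rw [h4 m hk]
      exact div_pos (mul_pos hdm (hq (m+1) hk)) hqh
  have hqhat : ∀ k, k + 1 < n → 0 < qhat k := by
    intro k hk
    rw [h2 k hk]; exact add_pos (hd k (by omega)) (he k hk)
  ext ⟨I, hI⟩ ⟨J, hJ⟩
  rw [mul_apply, mul_apply]
  simp only [unitLowerBidiagonal, upperBidiagonalU, of_apply]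
  rw [Fin.sum_univ_eq_sum_range (fun k =>
      (if I = k then (1:ℝ) else if I = k + 1 then ehat k else 0) *
      (if J = k then qhat k else if J = k + 1 then 1 else 0)) n,
    Fin.sum_univ_eq_sum_range (fun k =>
      (if k = I then q I else if k = I + 1 then 1 else 0) *
      (if k = J then (1:ℝ) else if k = J + 1 then e J else 0)) n]
  rw [sum_two_aux n I (I + 1) (by omega) (fun k =>
      (if k = I then q I else if k = I + 1 then 1 else 0) *
      (if k = J then (1:ℝ) else if k = J + 1 then e J else 0))
      (fun k hk1 hk2 => by simp [hk1, hk2])]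
  by_cases hI0 : I = 0
  · rw [sum_one_aux n I (fun k =>
        (if I = k then (1:ℝ) else if I = k + 1 then ehat k else 0) *
        (if J = k then qhat k else if J = k + 1 then 1 else 0))
        (fun k hk => by
          have hA : ¬ (I = k) := fun h => hk h.symm
          have hB : ¬ (I = k + 1) := by omega
          simp [hA, hB])]
    simp only [hI, if_true]
    split_ifs <;>
      first
      | (exfalso; omega)
      | ring1
      | -- diagonal, I = 0, I + 1 < n
        (rw [show J = I from by omega, show I = 0 from by omega, h2 0 (by omega), h1]; ring1)
      | -- diagonal, last row (I + 1 = n)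
        ((try rw [show J = I from by omega])
         have hq5 : qhat I = d I := by
           have := h5; rwa [show n - 1 = I by omega] at this
         first
         | (rw [hq5, show I = 0 by omega, h1]; ring1)
         | (have hI1 : I - 1 + 1 < n := by omega
            have hIe : I - 1 + 1 = I := by omega
            have hdI := h4 (I - 1) hI1
            have hehat := h3 (I - 1) hI1
            rw [hIe] at hdI hehat
            have hqh : qhat (I - 1) ≠ 0 := ne_of_gt (hqhat (I - 1) hI1)
            rw [hq5, hdI, hehat]
            field_simp
            first
            | linear_combination q I * h2 (I - 1) hI1
            | linear_combination (-(q I)) * h2 (I - 1) hI1))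
      | -- diagonal, interior, I ≠ 0
        (rw [show J = I from by omega]
         have hI1 : I - 1 + 1 < n := by omega
         have hIe : I - 1 + 1 = I := by omega
         have hdI := h4 (I - 1) hI1
         have hehat := h3 (I - 1) hI1
         rw [hIe] at hdI hehat
         have hqh : qhat (I - 1) ≠ 0 := ne_of_gt (hqhat (I - 1) hI1)
         rw [h2 I (by omega), hdI, hehat]
         field_simp
         first
         | linear_combination q I * h2 (I - 1) hI1
         | linear_combination (-(q I)) * h2 (I - 1) hI1)
      | -- subdiagonal
        (rw [show J = I - 1 from by omega]
         have hI1 : I - 1 + 1 < n := by omega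
         have hIe : I - 1 + 1 = I := by omega
         have hehat := h3 (I - 1) hI1
         rw [hIe] at hehat
         have hqh : qhat (I - 1) ≠ 0 := ne_of_gt (hqhat (I - 1) hI1)
         rw [hehat]
         field_simp
         ring)
  · rw [sum_two_aux n I (I - 1) (by omega) (fun k =>
        (if I = k then (1:ℝ) else if I = k + 1 then ehat k else 0) *
        (if J = k then qhat k else if J = k + 1 then 1 else 0))
        (fun k hk1 hk2 => by
          have hA : ¬ (I = k) := fun h => hk1 h.symm
          have hB : ¬ (I = k + 1) := by omega
          simp [hA, hB])]
    simp only [hI, if_true]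
    split_ifs <;>
      first
      | (exfalso; omega)
      | ring1
      | -- diagonal, I = 0, I + 1 < n
        (rw [show J = I from by omega, show I = 0 from by omega, h2 0 (by omega), h1]; ring1)
      | -- diagonal, last row (I + 1 = n)
        ((try rw [show J = I from by omega])
         have hq5 : qhat I = d I := by
           have := h5; rwa [show n - 1 = I by omega] at this
         first
         | (rw [hq5, show I = 0 by omega, h1]; ring1)
         | (have hI1 : I - 1 + 1 < n := by omega
            have hIe : I - 1 + 1 = I := by omega
            have hdI := h4 (I - 1) hI1
            have hehat := h3 (I - 1) hI1
            rw [hIe] at hdI hehat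
            have hqh : qhat (I - 1) ≠ 0 := ne_of_gt (hqhat (I - 1) hI1)
            rw [hq5, hdI, hehat]
            field_simp
            first
            | linear_combination q I * h2 (I - 1) hI1
            | linear_combination (-(q I)) * h2 (I - 1) hI1))
      | -- diagonal, interior, I ≠ 0
        (rw [show J = I from by omega]
         have hI1 : I - 1 + 1 < n := by omega
         have hIe : I - 1 + 1 = I := by omega
         have hdI := h4 (I - 1) hI1
         have hehat := h3 (I - 1) hI1
         rw [hIe] at hdI hehat
         have hqh : qhat (I - 1) ≠ 0 := ne_of_gt (hqhat (I - 1) hI1)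
         rw [h2 I (by omega), hdI, hehat]
         field_simp
         first
         | linear_combination q I * h2 (I - 1) hI1
         | linear_combination (-(q I)) * h2 (I - 1) hI1)
      | -- subdiagonal
        (rw [show J = I - 1 from by omega]
         have hI1 : I - 1 + 1 < n := by omega
         have hIe : I - 1 + 1 = I := by omega
         have hehat := h3 (I - 1) hI1
         rw [hIe] at hehat
         have hqh : qhat (I - 1) ≠ 0 := ne_of_gt (hqhat (I - 1) hI1)
         rw [hehat]
         field_simp
         ring)
end

section
/- With the same setup as the dqds transform with shift s ≥ 0 (d_1 = q_1 − s; hat{q}_k = d_k + e_k; hat{e}_k = e_k·q_{k+1}/hat{q}_k; d_{k+1} = d_k·q_{k+1}/hat{q}_k − s; hat{q}_n = d_n), assuming all q_k, e_k, hat{q}_k, hat{e}_k, d_k are positive, the matrices satisfy hat{L}·hat{U} = U·L − s·I, where L, U, hat{L}, hat{U} are the bidiagonal factors built from {q,e} and {hat{q},hat{e}} respectively. -/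
open Matrix

lemma sum_ite_val {n : ℕ} (i : Fin n) (f : Fin n → ℝ) :
    (∑ k : Fin n, if (i : ℕ) = (k : ℕ) then f k else 0) = f i := by
  simp [Fin.val_eq_val]

lemma sum_ite_val' {n : ℕ} (i : Fin n) (f : Fin n → ℝ) :
    (∑ k : Fin n, if (k : ℕ) = (i : ℕ) then f k else 0) = f i := by
  simp [Fin.val_eq_val]

lemma sum_ite_pred {n : ℕ} (i : Fin n) (f : ℕ → ℝ) :
    (∑ k : Fin n, if (i : ℕ) = (k : ℕ) + 1 then f (k : ℕ) else 0) =
      if 0 < (i : ℕ) then f ((i : ℕ) - 1) else 0 := by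
  by_cases h : 0 < (i : ℕ)
  · have hlt : (i : ℕ) - 1 < n := by omega
    rw [if_pos h, Finset.sum_eq_single (⟨(i : ℕ) - 1, hlt⟩ : Fin n)]
    · simp; omega
    · intro b _ hb
      rw [if_neg]
      intro hc
      exact hb (Fin.ext (by simp; omega))
    · simp
  · rw [if_neg h, Finset.sum_eq_zero]
    intro k _
    rw [if_neg]
    omega

lemma sum_ite_succ {n : ℕ} (i : Fin n) (f : ℕ → ℝ) :
    (∑ k : Fin n, if (k : ℕ) = (i : ℕ) + 1 then f (k : ℕ) else 0) =
      if (i : ℕ) + 1 < n then f ((i : ℕ) + 1) else 0 := by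
  by_cases h : (i : ℕ) + 1 < n
  · rw [if_pos h, Finset.sum_eq_single (⟨(i : ℕ) + 1, h⟩ : Fin n)]
    · simp
    · intro b _ hb
      rw [if_neg]
      intro hc
      exact hb (Fin.ext (by simp; omega))
    · simp
  · rw [if_neg h, Finset.sum_eq_zero]
    intro k _
    rw [if_neg]
    omega

lemma LU_apply (n : ℕ) (e q : ℕ → ℝ) (i j : Fin n) :
    (unitLowerBidiagonal n e * upperBidiagonalU n q) i j =
      if (i : ℕ) = (j : ℕ) then
        q (i : ℕ) + (if 0 < (i : ℕ) then e ((i : ℕ) - 1) else 0)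
      else if (j : ℕ) = (i : ℕ) + 1 then 1
      else if (i : ℕ) = (j : ℕ) + 1 then e ((i : ℕ) - 1) * q ((i : ℕ) - 1)
      else 0 := by
  rw [Matrix.mul_apply]
  have key : ∀ k : Fin n,
      unitLowerBidiagonal n e i k * upperBidiagonalU n q k j =
      (if (i : ℕ) = (k : ℕ) then
        (if (j : ℕ) = (k : ℕ) then q (k : ℕ) else if (j : ℕ) = (k : ℕ) + 1 then 1 else 0)
        else 0)
      + (if (i : ℕ) = (k : ℕ) + 1 then
          e (k : ℕ) * (if (j : ℕ) = (k : ℕ) then q (k : ℕ) else if (j : ℕ) = (k : ℕ) + 1 then 1 else 0)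
        else 0) := by
    intro k
    simp only [unitLowerBidiagonal, upperBidiagonalU, Matrix.of_apply]
    split_ifs <;> first | omega | ring1
  simp only [key]
  rw [Finset.sum_add_distrib, sum_ite_val, sum_ite_pred i
    (fun m => e m * (if (j : ℕ) = m then q m else if (j : ℕ) = m + 1 then 1 else 0))]
  split_ifs <;> first | omega | ring1

lemma UL_apply (n : ℕ) (e q : ℕ → ℝ) (i j : Fin n) :
    (upperBidiagonalU n q * unitLowerBidiagonal n e) i j =
      if (i : ℕ) = (j : ℕ) then
        q (i : ℕ) + (if (i : ℕ) + 1 < n then e (i : ℕ) else 0)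
      else if (j : ℕ) = (i : ℕ) + 1 then 1
      else if (i : ℕ) = (j : ℕ) + 1 then q (i : ℕ) * e (j : ℕ)
      else 0 := by
  rw [Matrix.mul_apply]
  have key : ∀ k : Fin n,
      upperBidiagonalU n q i k * unitLowerBidiagonal n e k j =
      (if (k : ℕ) = (i : ℕ) then
        q (i : ℕ) * (if (k : ℕ) = (j : ℕ) then 1 else if (k : ℕ) = (j : ℕ) + 1 then e (j : ℕ) else 0)
        else 0)
      + (if (k : ℕ) = (i : ℕ) + 1 then
          (if (k : ℕ) = (j : ℕ) then 1 else if (k : ℕ) = (j : ℕ) + 1 then e (j : ℕ) else 0)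
        else 0) := by
    intro k
    simp only [unitLowerBidiagonal, upperBidiagonalU, Matrix.of_apply]
    split_ifs <;> first | omega | ring1
  simp only [key]
  rw [Finset.sum_add_distrib, sum_ite_val' i
    (fun k => q (i : ℕ) * (if (k : ℕ) = (j : ℕ) then 1 else if (k : ℕ) = (j : ℕ) + 1 then e (j : ℕ) else 0)),
    sum_ite_succ i
    (fun m => (if m = (j : ℕ) then 1 else if m = (j : ℕ) + 1 then e (j : ℕ) else 0))]
  split_ifs <;> first | ring1 | (exfalso; omega) | (simp_all; try ring1)

/-- The dqds transform with shift `s ≥ 0` implements `L̂ * Û = U * L - s • I`. -/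
theorem dqds_transform (n : ℕ) (hn : 0 < n) (s : ℝ) (hs : 0 ≤ s)
    (q e qhat ehat d : ℕ → ℝ)
    (hq : ∀ k < n, 0 < q k) (he : ∀ k, k + 1 < n → 0 < e k)
    (hqhat : ∀ k < n, 0 < qhat k) (hehat : ∀ k, k + 1 < n → 0 < ehat k)
    (hd : ∀ k < n, 0 < d k)
    (h1 : d 0 = q 0 - s)
    (h2 : ∀ k, k + 1 < n → qhat k = d k + e k)
    (h3 : ∀ k, k + 1 < n → ehat k = e k * q (k + 1) / qhat k)
    (h4 : ∀ k, k + 1 < n → d (k + 1) = d k * q (k + 1) / qhat k - s)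
    (h5 : qhat (n - 1) = d (n - 1)) :
    unitLowerBidiagonal n ehat * upperBidiagonalU n qhat =
      upperBidiagonalU n q * unitLowerBidiagonal n e - s • (1 : Matrix (Fin n) (Fin n) ℝ) := by
  ext i j
  rw [Matrix.sub_apply, Matrix.smul_apply, Matrix.one_apply, LU_apply, UL_apply]
  simp only [smul_eq_mul]
  by_cases hij : (i : ℕ) = (j : ℕ)
  · have hij' : i = j := Fin.ext hij
    rw [if_pos hij, if_pos hij', if_pos hij, mul_one]
    by_cases hi0 : 0 < (i : ℕ)
    · rw [if_pos hi0]
      obtain ⟨m, hm⟩ : ∃ m, (i : ℕ) = m + 1 := ⟨(i : ℕ) - 1, by omega⟩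
      have hmn : m + 1 < n := by omega
      have hde : d m + e m ≠ 0 := by
        have := hd m (by omega)
        have := he m hmn
        positivity
      by_cases hlast : (i : ℕ) + 1 < n
      · rw [if_pos hlast, hm]
        simp only [Nat.add_sub_cancel]
        rw [h2 (m + 1) (by omega), h3 m hmn, h4 m hmn, h2 m hmn]
        field_simp
        ring
      · have hin : n - 1 = m + 1 := by omega
        rw [if_neg hlast, hm]
        simp only [Nat.add_sub_cancel]
        rw [hin] at h5
        rw [h5, h3 m hmn, h4 m hmn, h2 m hmn]
        field_simp
        ring
    · have hi0' : (i : ℕ) = 0 := by omega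
      rw [if_neg hi0, hi0', add_zero]
      by_cases hlast : (i : ℕ) + 1 < n
      · rw [hi0'] at hlast
        rw [if_pos hlast, h2 0 hlast, h1]
        ring
      · have hn1 : n - 1 = 0 := by omega
        rw [hn1] at h5
        rw [if_neg (show ¬ (0 + 1 < n) by omega), add_zero, h5, h1]
  · have hij' : ¬ i = j := fun h => hij (by rw [h])
    rw [if_neg hij, if_neg hij', if_neg hij, mul_zero, sub_zero]
    by_cases hsup : (j : ℕ) = (i : ℕ) + 1
    · rw [if_pos hsup, if_pos hsup]
    · rw [if_neg hsup, if_neg hsup]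
      by_cases hsub : (i : ℕ) = (j : ℕ) + 1
      · rw [if_pos hsub, if_pos hsub]
        have hj : (i : ℕ) - 1 = (j : ℕ) := by omega
        have hjn : (j : ℕ) + 1 < n := by omega
        have hq0 : qhat (j : ℕ) ≠ 0 := (hqhat _ (by omega)).ne'
        rw [hj, h3 _ hjn, hsub]
        field_simp
      · rw [if_neg hsub, if_neg hsub]
end

section
/- Let B be an n×n upper bidiagonal matrix with positive diagonal entries a_k and positive superdiagonal entries b_k, and let q_k = a_k², e_k = b_k². With L unit lower bidiagonal with subdiagonal (e_k) and U upper bidiagonal with diagonal (q_k) and superdiagonal 1, there is a diagonal matrix Δ = diag(1, π_1, π_1π_2, …, π_1⋯π_{n-1}) with π_i = a_i·b_i such that L·U = Δ·Bᵀ·B·Δ^{-1}. In particular L·U and Bᵀ·B have the same eigenvalues. -/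
/-!
With `Δ = diag d`, `d i = ∏_{j<i} a_j b_j`, and `D = diag (a_i d_i)`, rescaling the rows
and columns of `B` gives the two identities `U Δ = D B` and `Δ Bᵀ = L D`, since `d (i+1) = d i · a_i b_i`.
Hence `L U Δ = L D B = Δ Bᵀ B`, and `Δ` is invertible because all `a_i b_i` are positive.
-/

open Matrix

namespace Matrix

variable {ι α : Type*} [Fintype ι] [DecidableEq ι] [CommRing α]

theorem eq_mul_mul_inv_of_mul_eq_mul {M N P : Matrix ι ι α} (hP : IsUnit P)
    (h : M * P = P * N) : M = P * N * P⁻¹ := by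
  rw [← h, mul_nonsing_inv_cancel_right P M ((isUnit_iff_isUnit_det P).mp hP)]

theorem spectrum_eq_of_mul_eq_mul {M N P : Matrix ι ι α} (hP : IsUnit P)
    (h : M * P = P * N) : spectrum α M = spectrum α N := by
  obtain ⟨u, rfl⟩ := hP
  rw [eq_mul_mul_inv_of_mul_eq_mul u.isUnit h, ← coe_units_inv, spectrum.units_conjugate]

end Matrix

section Bidiagonal

variable {n : ℕ} {a b d : ℕ → ℝ}

theorem upperBidiagonalU_mul_diagonal {q : ℕ → ℝ} (hq : ∀ k, q k = a k ^ 2)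
    (hd : ∀ k, d (k + 1) = d k * (a k * b k)) :
    upperBidiagonalU n q * diagonal (fun i : Fin n => d i) =
      diagonal (fun i : Fin n => a i * d i) * upperBidiagonal n a b := by
  ext i j
  simp only [upperBidiagonalU, upperBidiagonal, mul_diagonal, diagonal_mul, of_apply]
  split_ifs with h1 h2
  · rw [h1, hq]; ring
  · rw [h2, hd]; ring
  · ring

theorem diagonal_mul_transpose_upperBidiagonal {e : ℕ → ℝ} (he : ∀ k, e k = b k ^ 2)
    (hd : ∀ k, d (k + 1) = d k * (a k * b k)) :
    diagonal (fun i : Fin n => d i) * (upperBidiagonal n a b)ᵀ =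
      unitLowerBidiagonal n e * diagonal (fun i : Fin n => a i * d i) := by
  ext i j
  simp only [unitLowerBidiagonal, upperBidiagonal, mul_diagonal, diagonal_mul, of_apply,
    transpose_apply]
  split_ifs with h1 h2
  · rw [Fin.ext h1]; ring
  · rw [h2, hd, he]; ring
  · ring

theorem unitLowerBidiagonal_mul_upperBidiagonalU_mul_diagonal {q e : ℕ → ℝ}
    (hq : ∀ k, q k = a k ^ 2) (he : ∀ k, e k = b k ^ 2)
    (hd : ∀ k, d (k + 1) = d k * (a k * b k)) :
    unitLowerBidiagonal n e * upperBidiagonalU n q * diagonal (fun i : Fin n => d i) =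
      diagonal (fun i : Fin n => d i) * ((upperBidiagonal n a b)ᵀ * upperBidiagonal n a b) := by
  rw [mul_assoc, upperBidiagonalU_mul_diagonal hq hd, ← mul_assoc,
    ← diagonal_mul_transpose_upperBidiagonal he hd, mul_assoc]

theorem isUnit_diagonal_prod_range {K : Type*} [Field K] {c : ℕ → K}
    (hc : ∀ k, k + 1 < n → c k ≠ 0) :
    IsUnit (diagonal fun i : Fin n => ∏ j ∈ Finset.range i, c j) := by
  refine isUnit_diagonal.mpr (Pi.isUnit_iff.mpr fun i => ?_)
  refine (Finset.prod_ne_zero_iff.mpr fun j hj => hc j ?_).isUnit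
  have := Finset.mem_range.mp hj
  omega

end Bidiagonal

theorem LU_similar_BtB_general (n : ℕ) (a b q e : ℕ → ℝ)
    (ha : ∀ k < n, 0 < a k) (hb : ∀ k, k + 1 < n → 0 < b k)
    (hq : ∀ k, q k = (a k) ^ 2) (he : ∀ k, e k = (b k) ^ 2) :
    let B := upperBidiagonal n a b
    let L := unitLowerBidiagonal n e
    let U := upperBidiagonalU n q
    let Δ : Matrix (Fin n) (Fin n) ℝ :=
      Matrix.diagonal fun i => ∏ j ∈ Finset.range (i : ℕ), (a j * b j)
    L * U = Δ * (Bᵀ * B) * Δ⁻¹ ∧ spectrum ℝ (L * U) = spectrum ℝ (Bᵀ * B) := by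
  intro B L U Δ
  have hd (k : ℕ) : ∏ j ∈ Finset.range (k + 1), (a j * b j) =
      (∏ j ∈ Finset.range k, (a j * b j)) * (a k * b k) :=
    Finset.prod_range_succ _ k
  have hLUΔ : L * U * Δ = Δ * (Bᵀ * B) :=
    unitLowerBidiagonal_mul_upperBidiagonalU_mul_diagonal
      (d := fun k => ∏ j ∈ Finset.range k, (a j * b j)) hq he hd
  have hΔ : IsUnit Δ :=
    isUnit_diagonal_prod_range fun k hk => (mul_pos (ha k (by omega)) (hb k hk)).ne'
  exact ⟨eq_mul_mul_inv_of_mul_eq_mul hΔ hLUΔ, spectrum_eq_of_mul_eq_mul hΔ hLUΔ⟩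

/-- `L*U` is diagonally similar to `Bᵀ*B`, hence they have the same eigenvalues. -/
theorem LU_similar_BtB (n : ℕ) (hn : 0 < n) (a b q e : ℕ → ℝ)
    (ha : ∀ k < n, 0 < a k) (hb : ∀ k, k + 1 < n → 0 < b k)
    (hq : ∀ k, q k = (a k) ^ 2) (he : ∀ k, e k = (b k) ^ 2) :
    let B := upperBidiagonal n a b
    let L := unitLowerBidiagonal n e
    let U := upperBidiagonalU n q
    let Δ : Matrix (Fin n) (Fin n) ℝ :=
      Matrix.diagonal fun i => ∏ j ∈ Finset.range (i : ℕ), (a j * b j)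
    L * U = Δ * (Bᵀ * B) * Δ⁻¹ ∧ spectrum ℝ (L * U) = spectrum ℝ (Bᵀ * B) :=
  LU_similar_BtB_general n a b q e ha hb hq he
end

section
/- Apply the dqd transform (shift 0) to positive arrays {q_k, e_k} coming from a positive upper bidiagonal matrix B (q_k = a_k², e_k = b_k²), producing intermediate values d_1,…,d_n. Then the (k,k) entry of (B·Bᵀ)^{-1} equals 1/d_k. -/
/-!
For `l ≤ k` the entries of the upper triangular matrix `B⁻¹` are
`(B⁻¹)ₗₖ = ∏_{l ≤ m < k} (-bₘ) / ∏_{l ≤ m ≤ k} aₘ`. Since `(B Bᵀ)⁻¹ = B⁻ᵀ B⁻¹`, its `k`-th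
diagonal entry is the squared norm `sₖ` of column `k` of `B⁻¹`. Column `k + 1` is column `k`
scaled by `-bₖ / aₖ₊₁`, extended by the entry `1 / aₖ₊₁`, so
`sₖ₊₁ = (bₖ / aₖ₊₁)² sₖ + 1 / aₖ₊₁²`. This is exactly the recurrence the dqd transform imposes
on `1 / dₖ`, and `s₀ = 1 / a₀² = 1 / d₀`.
-/

open Matrix

open Finset

section BidiagonalInverse

variable {K : Type*} [Field K] (a b : ℕ → K)

def bidiagInvEntry (l k : ℕ) : K :=
  if l ≤ k then (∏ m ∈ Ico l k, -b m) / ∏ m ∈ Ico l (k + 1), a m else 0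

theorem bidiagInvEntry_self (k : ℕ) : bidiagInvEntry a b k k = (a k)⁻¹ := by
  simp [bidiagInvEntry]

theorem bidiagInvEntry_of_lt {l k : ℕ} (h : k < l) : bidiagInvEntry a b l k = 0 :=
  if_neg (Nat.not_le.mpr h)

theorem bidiagInvEntry_succ_right {l k : ℕ} (h : l ≤ k) :
    bidiagInvEntry a b l (k + 1) = -(b k / a (k + 1)) * bidiagInvEntry a b l k := by
  rw [bidiagInvEntry, bidiagInvEntry, if_pos h, if_pos (by omega),
    prod_Ico_succ_top h, prod_Ico_succ_top (by omega : l ≤ k + 1)]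
  ring

theorem mul_bidiagInvEntry_add_mul_bidiagInvEntry_succ {l k : ℕ} (h : l < k) (hl : a l ≠ 0) :
    a l * bidiagInvEntry a b l k + b l * bidiagInvEntry a b (l + 1) k = 0 := by
  rw [bidiagInvEntry, bidiagInvEntry, if_pos h.le, if_pos (Nat.succ_le_of_lt h),
    prod_eq_prod_Ico_succ_bot h, prod_eq_prod_Ico_succ_bot (by omega : l < k + 1)]
  field_simp
  ring

def bidiagInvColNormSq (k : ℕ) : K :=
  ∑ l ∈ range (k + 1), bidiagInvEntry a b l k ^ 2

theorem bidiagInvColNormSq_succ (k : ℕ) :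
    bidiagInvColNormSq a b (k + 1) =
      (b k / a (k + 1)) ^ 2 * bidiagInvColNormSq a b k + (a (k + 1))⁻¹ ^ 2 := by
  have hcol : ∀ l ∈ range (k + 1),
      bidiagInvEntry a b l (k + 1) ^ 2 = (b k / a (k + 1)) ^ 2 * bidiagInvEntry a b l k ^ 2 := by
    intro l hl
    rw [bidiagInvEntry_succ_right a b (Nat.lt_succ_iff.mp (mem_range.mp hl))]
    ring
  rw [bidiagInvColNormSq, sum_range_succ, sum_congr rfl hcol, ← mul_sum, bidiagInvEntry_self,
    bidiagInvColNormSq]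

end BidiagonalInverse

def upperBidiagonalInv {K : Type*} [Field K] (n : ℕ) (a b : ℕ → K) : Matrix (Fin n) (Fin n) K :=
  Matrix.of fun l k => bidiagInvEntry a b l k

section UpperBidiagonal

variable {n : ℕ} {a b : ℕ → ℝ}

theorem upperBidiagonal_mul_apply (M : Matrix (Fin n) (Fin n) ℝ) (i j : Fin n) :
    (upperBidiagonal n a b * M) i j =
      a i * M i j + if h : (i : ℕ) + 1 < n then b i * M ⟨i + 1, h⟩ j else 0 := by
  rw [mul_apply]
  split_ifs with h
  · rw [Fintype.sum_eq_add i ⟨i + 1, h⟩ (by simp [Fin.ext_iff])]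
    · simp [upperBidiagonal]
    · rintro l ⟨hli, hli'⟩
      have : (l : ℕ) ≠ i + 1 := fun h => hli' (Fin.ext h)
      simp [upperBidiagonal, Fin.val_ne_of_ne hli, this]
  · rw [Fintype.sum_eq_single i]
    · simp [upperBidiagonal]
    · intro l hli
      have : (l : ℕ) ≠ i + 1 := by omega
      simp [upperBidiagonal, Fin.val_ne_of_ne hli, this]

theorem upperBidiagonal_mul_upperBidiagonalInv (ha : ∀ k < n, a k ≠ 0) :
    upperBidiagonal n a b * upperBidiagonalInv n a b = 1 := by
  ext i j
  rw [upperBidiagonal_mul_apply]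
  simp only [upperBidiagonalInv, of_apply]
  rcases lt_trichotomy (i : ℕ) j with h | h | h
  · rw [dif_pos (by omega), one_apply_ne (Fin.ne_of_lt h)]
    exact mul_bidiagInvEntry_add_mul_bidiagInvEntry_succ a b h (ha i i.isLt)
  · obtain rfl := Fin.ext h
    simp [bidiagInvEntry_self, bidiagInvEntry_of_lt, ha i i.isLt]
  · simp [bidiagInvEntry_of_lt _ _ h, bidiagInvEntry_of_lt _ _ (Nat.lt_succ_of_lt h),
      one_apply_ne (Fin.ne_of_gt h)]

theorem inv_upperBidiagonal_mul_transpose_apply_self (ha : ∀ k < n, a k ≠ 0) (k : Fin n) :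
    (upperBidiagonal n a b * (upperBidiagonal n a b)ᵀ)⁻¹ k k = bidiagInvColNormSq a b k := by
  have hinv : (upperBidiagonal n a b)⁻¹ = upperBidiagonalInv n a b :=
    inv_eq_right_inv (upperBidiagonal_mul_upperBidiagonalInv ha)
  rw [Matrix.mul_inv_rev, ← transpose_nonsing_inv, hinv, mul_apply]
  simp only [transpose_apply, upperBidiagonalInv, of_apply, ← sq]
  rw [Fin.sum_univ_eq_sum_range (fun l => bidiagInvEntry a b l k ^ 2), bidiagInvColNormSq]
  refine (sum_subset (range_subset_range.mpr k.isLt) fun l _ hl => ?_).symm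
  rw [bidiagInvEntry_of_lt a b (by simpa using hl), zero_pow two_ne_zero]

end UpperBidiagonal

theorem inv_dqd_succ {K : Type*} [Field K] {d q e d' : K} (hd : d ≠ 0)
    (hd' : d' = d * q / (d + e)) : d'⁻¹ = e / q * d⁻¹ + q⁻¹ := by
  rw [hd', inv_div]
  field_simp
  ring

theorem bidiagInvColNormSq_eq_inv_of_dqd {K : Type*} [Field K] {n : ℕ} {a b d : ℕ → K}
    (hd0 : d 0 = a 0 ^ 2)
    (hdk : ∀ k, k + 1 < n → d (k + 1) = d k * a (k + 1) ^ 2 / (d k + b k ^ 2))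
    (hd : ∀ k < n, d k ≠ 0) : ∀ k < n, bidiagInvColNormSq a b k = (d k)⁻¹
  | 0, _ => by simp [bidiagInvColNormSq, bidiagInvEntry_self, hd0]
  | k + 1, hk => by
    rw [bidiagInvColNormSq_succ, bidiagInvColNormSq_eq_inv_of_dqd hd0 hdk hd k (by omega),
      inv_dqd_succ (hd k (by omega)) (hdk k hk), div_pow, inv_pow]

theorem dqd_pos {n : ℕ} {a b d : ℕ → ℝ} (ha : ∀ k < n, a k ≠ 0) (hd0 : d 0 = a 0 ^ 2)
    (hdk : ∀ k, k + 1 < n → d (k + 1) = d k * a (k + 1) ^ 2 / (d k + b k ^ 2)) :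
    ∀ k < n, 0 < d k
  | 0, h => hd0 ▸ pow_two_pos_of_ne_zero (ha 0 h)
  | k + 1, hk => by
    have hd := dqd_pos ha hd0 hdk k (by omega)
    rw [hdk k hk]
    have := pow_two_pos_of_ne_zero (ha (k + 1) hk)
    positivity

theorem dqd_d_inverse_diag_general (n : ℕ) (a b d : ℕ → ℝ)
    (ha : ∀ k < n, 0 < a k)
    (hd1 : d 0 = (a 0) ^ 2)
    (hdk : ∀ k, k + 1 < n → d (k + 1) = d k * (a (k + 1)) ^ 2 / (d k + (b k) ^ 2)) :
    ∀ k : Fin n,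
      ((upperBidiagonal n a b * (upperBidiagonal n a b)ᵀ)⁻¹) k k = (d (k : ℕ))⁻¹ := by
  have ha' : ∀ k < n, a k ≠ 0 := fun k hk => (ha k hk).ne'
  have hd : ∀ k < n, d k ≠ 0 := fun k hk => (dqd_pos ha' hd1 hdk k hk).ne'
  intro k
  rw [inv_upperBidiagonal_mul_transpose_apply_self ha',
    bidiagInvColNormSq_eq_inv_of_dqd hd1 hdk hd k k.isLt]

/-- The intermediate quantities of the dqd transform are the reciprocals of the
diagonal entries of `(B*Bᵀ)⁻¹`. -/
theorem dqd_d_inverse_diag (n : ℕ) (hn : 0 < n) (a b d : ℕ → ℝ)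
    (ha : ∀ k < n, 0 < a k) (hb : ∀ k, k + 1 < n → 0 < b k)
    (hd1 : d 0 = (a 0) ^ 2)
    (hdk : ∀ k, k + 1 < n → d (k + 1) = d k * (a (k + 1)) ^ 2 / (d k + (b k) ^ 2)) :
    ∀ k : Fin n,
      ((upperBidiagonal n a b * (upperBidiagonal n a b)ᵀ)⁻¹) k k = (d (k : ℕ))⁻¹ :=
  dqd_d_inverse_diag_general n a b d ha hd1 hdk
end

section
/- Let M be an n×n symmetric positive definite matrix, let d_k = 1/[(M^{-1})_{kk}] for each k, and let d_min = min_k d_k. Then (1/n)·d_min ≤ λ_min(M) ≤ d_min ≤ n·λ_min(M). -/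
open Matrix

section Aux

variable {n : ℕ}

lemma aux_entry (U : Matrix (Fin n) (Fin n) ℝ) (f : Fin n → ℝ) (k : Fin n) :
    (U * diagonal f * star U) k k = ∑ i, f i * (U k i)^2 := by
  simp [mul_apply, diagonal, Finset.sum_comm, mul_comm, mul_assoc, sq]
  congr 1; ext i
  ring

end Aux

/-- For a symmetric positive definite matrix `M`, with `d_k = 1/(M⁻¹)_{kk}` and
`d_min = min_k d_k`, one has `(1/n)·d_min ≤ λ_min(M) ≤ d_min ≤ n·λ_min(M)`. -/
theorem posdef_dmin_bounds (n : ℕ) (hn : 0 < n) (M : Matrix (Fin n) (Fin n) ℝ)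
    (hM : M.PosDef) (d : Fin n → ℝ) (hd : ∀ k, d k = ((M⁻¹) k k)⁻¹) :
    (1 / (n : ℝ)) * (⨅ k, d k) ≤ (⨅ i, hM.1.eigenvalues i) ∧
      (⨅ i, hM.1.eigenvalues i) ≤ (⨅ k, d k) ∧
      (⨅ k, d k) ≤ (n : ℝ) * ⨅ i, hM.1.eigenvalues i := by
  have : NeZero n := ⟨hn.ne'⟩
  set U : Matrix (Fin n) (Fin n) ℝ := (hM.1.eigenvectorUnitary : Matrix (Fin n) (Fin n) ℝ)
    with hUdef
  set lam : Fin n → ℝ := hM.1.eigenvalues with hlam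
  have hpos : ∀ i, 0 < lam i := hM.eigenvalues_pos
  have hUU : U * star U = 1 := mem_unitaryGroup_iff.mp hM.1.eigenvectorUnitary.2
  have hUU' : star U * U = 1 := mem_unitaryGroup_iff'.mp hM.1.eigenvectorUnitary.2
  -- row norms
  have hrow : ∀ k, ∑ i, (U k i)^2 = 1 := by
    intro k
    have := congrFun (congrFun hUU k) k
    simpa [mul_apply, sq, star_apply] using this
  have hcol : ∀ i, ∑ k, (U k i)^2 = 1 := by
    intro i
    have := congrFun (congrFun hUU' i) i
    simpa [mul_apply, sq, star_apply] using this
  -- spectral theorem and inverse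
  have hspec : M = U * diagonal lam * star U := by
    have := hM.1.spectral_theorem
    simpa using this
  have hinv : M⁻¹ = U * diagonal (fun i => (lam i)⁻¹) * star U := by
    apply inv_eq_right_inv
    rw [hspec]
    calc U * diagonal lam * star U * (U * diagonal (fun i => (lam i)⁻¹) * star U)
        = U * diagonal lam * (star U * U) * diagonal (fun i => (lam i)⁻¹) * star U := by
          noncomm_ring
      _ = U * (diagonal lam * diagonal (fun i => (lam i)⁻¹)) * star U := by
          rw [hUU']; noncomm_ring
      _ = U * star U := by
          rw [diagonal_mul_diagonal]
          congr 1
          rw [show (fun i => lam i * (lam i)⁻¹) = fun _ => (1:ℝ) from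
            funext fun i => mul_inv_cancel₀ (hpos i).ne', diagonal_one, mul_one]
      _ = 1 := hUU
  have hNkk : ∀ k, (M⁻¹) k k = ∑ i, (lam i)⁻¹ * (U k i)^2 := by
    intro k; rw [hinv, aux_entry]
  -- min eigenvalue attained
  obtain ⟨i0, -, hi0⟩ := Finset.exists_min_image Finset.univ lam ⟨0, Finset.mem_univ 0⟩
  have hi0' : ∀ i, lam i0 ≤ lam i := fun i => hi0 i (Finset.mem_univ i)
  have hlmin : (⨅ i, lam i) = lam i0 :=
    le_antisymm (ciInf_le (Finite.bddBelow_range _) i0) (le_ciInf hi0')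
  -- N k k > 0 and ≤ (lam i0)⁻¹
  have hNpos : ∀ k, 0 < (M⁻¹) k k := fun k => (hM.inv).diag_pos
  have hNle : ∀ k, (M⁻¹) k k ≤ (lam i0)⁻¹ := by
    intro k
    rw [hNkk k]
    calc ∑ i, (lam i)⁻¹ * (U k i)^2 ≤ ∑ i, (lam i0)⁻¹ * (U k i)^2 := by
          apply Finset.sum_le_sum
          intro i _
          exact mul_le_mul_of_nonneg_right
            (inv_anti₀ (hpos i0) (hi0' i)) (sq_nonneg _)
      _ = (lam i0)⁻¹ * ∑ i, (U k i)^2 := by rw [Finset.mul_sum]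
      _ = (lam i0)⁻¹ := by rw [hrow k, mul_one]
  have hdk : ∀ k, lam i0 ≤ d k := by
    intro k
    rw [hd k]
    rw [← inv_inv (lam i0)]
    exact inv_anti₀ (hNpos k) (hNle k)
  -- min d attained
  obtain ⟨k0, -, hk0⟩ := Finset.exists_min_image Finset.univ d ⟨0, Finset.mem_univ 0⟩
  have hk0' : ∀ k, d k0 ≤ d k := fun k => hk0 k (Finset.mem_univ k)
  have hdmin : (⨅ k, d k) = d k0 :=
    le_antisymm (ciInf_le (Finite.bddBelow_range _) k0) (le_ciInf hk0')
  have hdpos : 0 < d k0 := lt_of_lt_of_le (hpos i0) (hdk k0)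
  -- trace lower bound
  have htr1 : (lam i0)⁻¹ ≤ ∑ k, (M⁻¹) k k := by
    have h1 : ∑ k, (M⁻¹) k k = ∑ i, (lam i)⁻¹ := by
      calc ∑ k, (M⁻¹) k k = ∑ k, ∑ i, (lam i)⁻¹ * (U k i)^2 := by
            simp_rw [hNkk]
        _ = ∑ i, (lam i)⁻¹ * ∑ k, (U k i)^2 := by
            rw [Finset.sum_comm]; simp_rw [Finset.mul_sum]
        _ = ∑ i, (lam i)⁻¹ := by simp_rw [hcol, mul_one]
    rw [h1]
    exact Finset.single_le_sum (fun i _ => (inv_pos.mpr (hpos i)).le) (Finset.mem_univ i0)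
  -- trace upper bound
  have htr2 : ∑ k, (M⁻¹) k k ≤ (n : ℝ) * (d k0)⁻¹ := by
    calc ∑ k, (M⁻¹) k k ≤ ∑ _k : Fin n, (d k0)⁻¹ := by
          apply Finset.sum_le_sum
          intro k _
          have : (M⁻¹) k k = (d k)⁻¹ := by rw [hd k, inv_inv]
          rw [this]
          exact inv_anti₀ hdpos (hk0' k)
      _ = (n : ℝ) * (d k0)⁻¹ := by simp [mul_comm]
  have key : d k0 ≤ (n : ℝ) * lam i0 := by
    have h := htr1.trans htr2
    have hl0 := hpos i0
    have e1 : lam i0 * (lam i0)⁻¹ = 1 := mul_inv_cancel₀ hl0.ne'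
    have e2 : d k0 * (d k0)⁻¹ = 1 := mul_inv_cancel₀ hdpos.ne'
    nlinarith [mul_le_mul_of_nonneg_left h (mul_pos hl0 hdpos).le]
  rw [hlmin, hdmin]
  refine ⟨?_, hdk k0, key⟩
  rw [div_mul_eq_mul_div, one_mul, div_le_iff₀ (by exact_mod_cast hn)]
  calc d k0 ≤ (n:ℝ) * lam i0 := key
    _ = lam i0 * n := mul_comm _ _
end

section
/- Let B~(k) be an n×n 'twisted' matrix: rows 1,…,k-1 form an upper bidiagonal block, row k is a singleton with single nonzero entry tilde{a}_k in position (k,k), and rows k,…,n below form a lower bidiagonal block in columns k,…,n (as arises after k−1 minor steps of oqd applied to Bᵀ). Write B~(k) = tilde{B} + E where tilde{B} equals B~(k) with its k-th row zeroed and E = tilde{a}_k·𝐞_k·𝐞_kᵀ. Then (B~(k))ᵀ·B~(k) = tilde{B}ᵀ·tilde{B} + Eᵀ·E, and consequently |σ_i(B~(k))² − σ_i(tilde{B})²| ≤ tilde{a}_k² for every i, where σ_i denotes the i-th largest singular value. -/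
/-!
Since row `k` of `B̃` vanishes, `Eᵀ B̃ = 0`, so the cross terms of `(B̃ + E)ᵀ (B̃ + E)` drop out and
it equals `B̃ᵀ B̃ + ã² 𝐞ₖ𝐞ₖᵀ`. The quadratic form `ã² x_k²` of the perturbation lies between `0` and
`ã² ‖x‖²`, so Weyl's inequality bounds the shift of each sorted eigenvalue by `ã²`. Weyl's inequality
itself is the Courant–Fischer argument: some nonzero `x` is orthogonal to the eigenvectors of the
first operator after index `i` and to those of the second before index `i`, and comparing Rayleigh
quotients at `x` gives `λᵢ(T) ≤ λᵢ(S) + c`.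
-/

open Matrix
open scoped RealInnerProductSpace

theorem exists_ne_zero_forall_inner_eq_zero {𝕜 E ι : Type*} [RCLike 𝕜] [NormedAddCommGroup E]
    [InnerProductSpace 𝕜 E] [FiniteDimensional 𝕜 E] [Fintype ι] (f : ι → E)
    (h : Fintype.card ι < Module.finrank 𝕜 E) : ∃ x ≠ 0, ∀ j, inner 𝕜 (f j) x = 0 := by
  have hspan : Submodule.span 𝕜 (Set.range f) ≠ ⊤ := fun htop => by
    have := finrank_range_le_card (R := 𝕜) f
    rw [Set.finrank, htop, finrank_top] at this
    omega
  obtain ⟨x, hx, hx0⟩ := Submodule.exists_mem_ne_zero_of_ne_bot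
    (mt Submodule.orthogonal_eq_bot_iff.mp hspan)
  exact ⟨x, hx0, fun j => hx _ (Submodule.subset_span ⟨j, rfl⟩)⟩

namespace LinearMap.IsSymmetric

variable {E : Type*} [NormedAddCommGroup E] [InnerProductSpace ℝ E] [FiniteDimensional ℝ E]
  {T : E →ₗ[ℝ] E} (hT : T.IsSymmetric) {n : ℕ} {hn : Module.finrank ℝ E = n}

lemma inner_apply_self_eq_sum (x : E) :
    ⟪T x, x⟫ = ∑ j, hT.eigenvalues hn j * ⟪hT.eigenvectorBasis hn j, x⟫ ^ 2 := by
  rw [← (hT.eigenvectorBasis hn).repr.inner_map_map, PiLp.inner_apply]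
  refine Finset.sum_congr rfl fun j _ => ?_
  rw [eigenvectorBasis_apply_self_apply]
  simp only [OrthonormalBasis.repr_apply_apply, RCLike.inner_apply, conj_trivial,
    RCLike.ofReal_real_eq_id, id_eq]
  ring

lemma eigenvalues_mul_norm_sq_le_inner {i : Fin n} {x : E}
    (hx : ∀ j, i < j → ⟪hT.eigenvectorBasis hn j, x⟫ = 0) :
    hT.eigenvalues hn i * ‖x‖ ^ 2 ≤ ⟪T x, x⟫ := by
  rw [hT.inner_apply_self_eq_sum, ← (hT.eigenvectorBasis hn).sum_sq_inner_right, Finset.mul_sum]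
  refine Finset.sum_le_sum fun j _ => ?_
  rcases lt_or_ge i j with hij | hji
  · simp [hx j hij]
  · exact mul_le_mul_of_nonneg_right (hT.eigenvalues_antitone hn hji) (sq_nonneg _)

lemma inner_le_eigenvalues_mul_norm_sq {i : Fin n} {x : E}
    (hx : ∀ j, j < i → ⟪hT.eigenvectorBasis hn j, x⟫ = 0) :
    ⟪T x, x⟫ ≤ hT.eigenvalues hn i * ‖x‖ ^ 2 := by
  rw [hT.inner_apply_self_eq_sum, ← (hT.eigenvectorBasis hn).sum_sq_inner_right, Finset.mul_sum]
  refine Finset.sum_le_sum fun j _ => ?_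
  rcases lt_or_ge j i with hji | hij
  · simp [hx j hji]
  · exact mul_le_mul_of_nonneg_right (hT.eigenvalues_antitone hn hij) (sq_nonneg _)

theorem eigenvalues_le_add_of_inner_le {S : E →ₗ[ℝ] E} (hS : S.IsSymmetric) {c : ℝ}
    (h : ∀ x, ⟪T x, x⟫ ≤ ⟪S x, x⟫ + c * ‖x‖ ^ 2) (i : Fin n) :
    hT.eigenvalues hn i ≤ hS.eigenvalues hn i + c := by
  classical
  obtain ⟨x, hx0, hx⟩ := exists_ne_zero_forall_inner_eq_zero (𝕜 := ℝ)
    (fun j : {j // j ≠ i} =>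
      if i < j.1 then hT.eigenvectorBasis hn j else hS.eigenvectorBasis hn j)
    (by rw [Fintype.card_subtype_compl, Fintype.card_subtype_eq, Fintype.card_fin, hn]
        exact Nat.sub_lt i.pos one_pos)
  have hxT : ∀ j, i < j → ⟪hT.eigenvectorBasis hn j, x⟫ = 0 := fun j hij => by
    simpa [hij] using hx ⟨j, hij.ne'⟩
  have hxS : ∀ j, j < i → ⟪hS.eigenvectorBasis hn j, x⟫ = 0 := fun j hji => by
    simpa [hji.not_gt] using hx ⟨j, hji.ne⟩
  refine le_of_mul_le_mul_right ?_ (by positivity : 0 < ‖x‖ ^ 2)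
  calc hT.eigenvalues hn i * ‖x‖ ^ 2 ≤ ⟪T x, x⟫ := hT.eigenvalues_mul_norm_sq_le_inner hxT
    _ ≤ ⟪S x, x⟫ + c * ‖x‖ ^ 2 := h x
    _ ≤ (hS.eigenvalues hn i + c) * ‖x‖ ^ 2 := by
      rw [add_mul]
      gcongr
      exact hS.inner_le_eigenvalues_mul_norm_sq hxS

end LinearMap.IsSymmetric

namespace Matrix

variable {m : Type*} [Fintype m]

lemma single_mul_eq_zero_of_row_eq_zero {l n α : Type*} [Fintype n]
    [NonUnitalNonAssocSemiring α] [DecidableEq l] [DecidableEq m] {B : Matrix m n α} {k : m}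
    (hrow : ∀ j, B k j = 0) (i : l) (a : α) : single i k a * B = 0 := by
  ext i' j
  by_cases hi : i = i'
  · subst hi
    simp [single_mul_apply_same, hrow]
  · exact single_mul_apply_of_ne (h := Ne.symm hi) ..

lemma transpose_mul_add_eq_of_transpose_mul_eq_zero {n α : Type*} [CommRing α]
    {B E : Matrix m n α} (h : Eᵀ * B = 0) :
    (B + E)ᵀ * (B + E) = Bᵀ * B + Eᵀ * E := by
  have h' : Bᵀ * E = 0 := by simpa using congrArg transpose h
  rw [transpose_add, Matrix.add_mul, Matrix.mul_add, Matrix.mul_add, h, h']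
  abel

lemma dotProduct_single_mulVec [DecidableEq m] {α : Type*} [CommRing α] (x : m → α) (k : m)
    (a : α) : x ⬝ᵥ single k k a *ᵥ x = a * x k ^ 2 := by
  rw [single_mulVec_eq, dotProduct_smul, dotProduct_single, smul_eq_mul]
  ring

lemma sq_le_dotProduct_self {α : Type*} [CommRing α] [LinearOrder α] [IsStrictOrderedRing α]
    (x : m → α) (k : m) : x k ^ 2 ≤ x ⬝ᵥ x := by
  rw [sq]
  exact Finset.single_le_sum (fun i _ => mul_self_nonneg (x i)) (Finset.mem_univ k)

lemma inner_toLpLin_apply_self [DecidableEq m] (A : Matrix m m ℝ) (x : EuclideanSpace ℝ m) :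
    ⟪toLpLin 2 2 A x, x⟫ = x.ofLp ⬝ᵥ A *ᵥ x.ofLp := by
  simp [EuclideanSpace.inner_eq_star_dotProduct, toLpLin_apply]

namespace IsHermitian

variable [DecidableEq m] {A B : Matrix m m ℝ}

theorem eigenvalues₀_le_add (hA : A.IsHermitian) (hB : B.IsHermitian) {c : ℝ}
    (h : ∀ x, x ⬝ᵥ A *ᵥ x ≤ x ⬝ᵥ B *ᵥ x + c * (x ⬝ᵥ x)) (i : Fin (Fintype.card m)) :
    hA.eigenvalues₀ i ≤ hB.eigenvalues₀ i + c := by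
  refine LinearMap.IsSymmetric.eigenvalues_le_add_of_inner_le _ _ (fun x => ?_) i
  rw [inner_toLpLin_apply_self, inner_toLpLin_apply_self, ← real_inner_self_eq_norm_sq,
    EuclideanSpace.inner_eq_star_dotProduct, star_trivial]
  exact h x

theorem abs_eigenvalues₀_sub_le (hA : A.IsHermitian) (hB : B.IsHermitian) {c : ℝ}
    (h : ∀ x, |x ⬝ᵥ A *ᵥ x - x ⬝ᵥ B *ᵥ x| ≤ c * (x ⬝ᵥ x)) (i : Fin (Fintype.card m)) :
    |hA.eigenvalues₀ i - hB.eigenvalues₀ i| ≤ c := by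
  have hAB := hA.eigenvalues₀_le_add hB (fun x => by linarith [(abs_le.1 (h x)).2]) i
  have hBA := hB.eigenvalues₀_le_add hA (fun x => by linarith [(abs_le.1 (h x)).1]) i
  exact abs_sub_le_iff.2 ⟨by linarith, by linarith⟩

theorem eq_eigenvalues₀_of_antitone {n : ℕ} {A : Matrix (Fin n) (Fin n) ℝ} (hA : A.IsHermitian)
    {μ : Fin n → ℝ} (hμ : Antitone μ) (hσ : ∃ σ : Equiv.Perm (Fin n), μ = hA.eigenvalues ∘ σ) :
    μ = hA.eigenvalues₀ ∘ Fin.cast (Fintype.card_fin n).symm := by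
  obtain ⟨σ, rfl⟩ := hσ
  set f := hA.eigenvalues₀ ∘ Fin.cast (Fintype.card_fin n).symm
  have hf : Antitone f := hA.eigenvalues₀_antitone.comp_monotone (Fin.cast_strictMono _).monotone
  set τ : Equiv.Perm (Fin n) :=
    (Fintype.equivOfCardEq (Fintype.card_fin _)).symm.trans (finCongr (Fintype.card_fin n))
  have hτ : hA.eigenvalues = f ∘ τ := by
    ext i
    simp [f, τ, eigenvalues]
  rw [hτ] at hμ ⊢
  simpa [Function.comp_assoc] using
    Tuple.unique_antitone (σ := τ * σ) (τ := 1) hμ (by simpa using hf)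

end IsHermitian

end Matrix

/-- Twisted-matrix deflation: if row `k` of `B̃` is zero and `E = ã_k·𝐞ₖ𝐞ₖᵀ`,
then `(B̃+E)ᵀ(B̃+E) = B̃ᵀB̃ + EᵀE`, and the ordered squared singular values of
`B̃+E` and `B̃` differ by at most `ã_k²`. -/
theorem twisted_deflation (n : ℕ) (Btil : Matrix (Fin n) (Fin n) ℝ) (k : Fin n)
    (atil : ℝ) (hrow : ∀ j, Btil k j = 0)
    (E : Matrix (Fin n) (Fin n) ℝ) (hE : E = Matrix.single k k atil)
    (hB : ((Btil + E)ᵀ * (Btil + E)).IsHermitian)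
    (hBt : (Btilᵀ * Btil).IsHermitian)
    (μ ν : Fin n → ℝ) (hμa : Antitone μ) (hνa : Antitone ν)
    (hμ : ∃ σ : Equiv.Perm (Fin n), μ = hB.eigenvalues ∘ σ)
    (hν : ∃ σ : Equiv.Perm (Fin n), ν = hBt.eigenvalues ∘ σ) :
    (Btil + E)ᵀ * (Btil + E) = Btilᵀ * Btil + Eᵀ * E ∧
      ∀ i, |μ i - ν i| ≤ atil ^ 2 := by
  have hEt : Eᵀ = E := by rw [hE, transpose_single]
  have hEB : Eᵀ * Btil = 0 := by
    rw [hEt, hE]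
    exact single_mul_eq_zero_of_row_eq_zero hrow k atil
  have hgram := transpose_mul_add_eq_of_transpose_mul_eq_zero hEB
  have hEE : Eᵀ * E = single k k (atil ^ 2) := by rw [hEt, hE, single_mul_single_same, sq]
  refine ⟨hgram, fun i => ?_⟩
  rw [hB.eq_eigenvalues₀_of_antitone hμa hμ, hBt.eq_eigenvalues₀_of_antitone hνa hν]
  refine hB.abs_eigenvalues₀_sub_le hBt (fun x => ?_) _
  rw [hgram, add_mulVec, dotProduct_add, add_sub_cancel_left, hEE, dotProduct_single_mulVec,
    abs_of_nonneg (by positivity)]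
  exact mul_le_mul_of_nonneg_left (sq_le_dotProduct_self x k) (sq_nonneg _)
end
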